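/- arXiv:1812.08223 — 2 statements merged into one kernel-verified Lean document; each statement's English description precedes it below -/
import Mathlib

section
/- For any positive semidefinite operator σ on C^M ⊗ C^M with ‖T_B(σ)‖₁ ≤ 1 (where T_B is partial transpose on the second factor and ‖·‖₁ the trace norm), the overlap with the maximally entangled state satisfies Tr[Φ σ] ≤ 1/M. -/
open Matrix
open scoped ComplexOrder

noncomputable section

/-- Trace norm of a complex square matrix: `‖A‖₁ = Tr √(AᴴA)`. -/
def traceNorm {n : Type*} [Fintype n] [DecidableEq n] (A : Matrix n n ℂ) : ℝ :=
  (((Matrix.posSemidef_conjTranspose_mul_self A).1.eigenvectorUnitary : Matrix n n ℂ) *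
    diagonal (((↑) : ℝ → ℂ) ∘ Real.sqrt ∘ (Matrix.posSemidef_conjTranspose_mul_self A).1.eigenvalues) *
    (star (Matrix.posSemidef_conjTranspose_mul_self A).1.eigenvectorUnitary : Matrix n n ℂ)).trace.re

/-- Partial transpose on the second tensor factor. -/
def ptB {α β : Type*} (A : Matrix (α × β) (α × β) ℂ) : Matrix (α × β) (α × β) ℂ :=
  fun x y => A (x.1, y.2) (y.1, x.2)

/-- The maximally entangled state `Φ = |Φ⟩⟨Φ|` with `|Φ⟩ = (1/√M) ∑ᵢ |i⟩⊗|i⟩`. -/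
def maxEnt (M : ℕ) : Matrix (Fin M × Fin M) (Fin M × Fin M) ℂ :=
  fun x y => if x.1 = x.2 ∧ y.1 = y.2 then (1 / (M : ℂ)) else 0

/-! The overlap is a partial-transpose identity in disguise: `Tr[Φ σ] = Tr[F T_B(σ)] / M`, where
`F` is the swap operator. Since `F` is unitary and `T_B(σ)` is Hermitian, writing `T_B(σ)` in its
eigenbasis turns `Tr[F T_B(σ)]` into `∑ᵢ Gᵢᵢ λᵢ` for a unitary `G`, whose entries have modulus at
most one; hence its real part is at most `∑ᵢ |λᵢ| = ‖T_B(σ)‖₁ ≤ 1`. -/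

open scoped MatrixOrder

variable {n : Type*} [Fintype n] [DecidableEq n]

theorem traceNorm_eq_re_trace_abs (A : Matrix n n ℂ) : traceNorm A = (CFC.abs A).trace.re := by
  have hA := posSemidef_conjTranspose_mul_self A
  rw [CFC.abs, CFC.sqrt_eq_cfc, star_eq_conjTranspose, cfc_nnreal_eq_real _ _ hA.nonneg,
    hA.1.cfc_eq]
  simp only [traceNorm, IsHermitian.cfc, Unitary.conjStarAlgAut_apply]
  congr! 6
  funext i
  simp only [Function.comp_apply, Real.coe_sqrt, Real.coe_toNNReal',
    max_eq_left (hA.eigenvalues_nonneg i)]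

theorem trace_unitary_conj (U : unitaryGroup n ℂ) (A : Matrix n n ℂ) :
    ((U : Matrix n n ℂ) * A * star (U : Matrix n n ℂ)).trace = A.trace := by
  rw [trace_mul_cycle, Unitary.star_mul_self_of_mem U.2, one_mul]

theorem Matrix.IsHermitian.traceNorm_eq_sum_abs_eigenvalues {X : Matrix n n ℂ}
    (hX : X.IsHermitian) : traceNorm X = ∑ i, |hX.eigenvalues i| := by
  rw [traceNorm_eq_re_trace_abs, CFC.abs_eq_cfc_norm X hX.isSelfAdjoint, hX.cfc_eq,
    IsHermitian.cfc, Unitary.conjStarAlgAut_apply, trace_unitary_conj, trace_diagonal,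
    Complex.re_sum]
  simp

theorem Matrix.IsHermitian.trace_mul_eq_sum_eigenvalues {U X : Matrix n n ℂ}
    (hX : X.IsHermitian) :
    (U * X).trace = ∑ i, (star (hX.eigenvectorUnitary : Matrix n n ℂ) * U *
      hX.eigenvectorUnitary) i i * hX.eigenvalues i := by
  conv_lhs => rw [hX.spectral_theorem, Unitary.conjStarAlgAut_apply]
  rw [← Matrix.mul_assoc, ← Matrix.mul_assoc, trace_mul_cycle, ← Matrix.mul_assoc]
  simp [trace, mul_diagonal]

theorem Matrix.IsHermitian.re_trace_unitary_mul_le_traceNorm {U X : Matrix n n ℂ}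
    (hU : U ∈ unitaryGroup n ℂ) (hX : X.IsHermitian) : (U * X).trace.re ≤ traceNorm X := by
  set V := hX.eigenvectorUnitary
  set G := star (V : Matrix n n ℂ) * U * V
  have hG : G ∈ unitaryGroup n ℂ := mul_mem (mul_mem (Unitary.star_mem V.2) hU) V.2
  rw [hX.trace_mul_eq_sum_eigenvalues, hX.traceNorm_eq_sum_abs_eigenvalues, Complex.re_sum]
  refine Finset.sum_le_sum fun i _ => ?_
  calc (G i i * hX.eigenvalues i).re ≤ ‖G i i * hX.eigenvalues i‖ := Complex.re_le_norm _
    _ = ‖G i i‖ * |hX.eigenvalues i| := by rw [norm_mul, Complex.norm_real, Real.norm_eq_abs]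
    _ ≤ |hX.eigenvalues i| :=
      mul_le_of_le_one_left (abs_nonneg _) (entry_norm_bound_of_unitary hG i i)

theorem Equiv.Perm.permMatrix_mem_unitaryGroup {R : Type*} [CommRing R] [StarRing R]
    (σ : Equiv.Perm n) : σ.permMatrix R ∈ unitaryGroup n R := by
  rw [mem_unitaryGroup_iff', star_eq_conjTranspose, conjTranspose_permMatrix, ← permMatrix_mul,
    mul_inv_cancel, permMatrix_one]

theorem trace_permMatrix_mul {R : Type*} [CommRing R] (σ : Equiv.Perm n) (A : Matrix n n R) :
    (σ.permMatrix R * A).trace = ∑ i, A (σ i) i := by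
  rw [PEquiv.toMatrix_toPEquiv_mul]
  rfl

theorem Matrix.IsHermitian.ptB {α β : Type*} {A : Matrix (α × β) (α × β) ℂ}
    (hA : A.IsHermitian) : (ptB A).IsHermitian := by
  ext x y
  simpa [_root_.ptB] using congrFun₂ hA (x.1, y.2) (y.1, x.2)

theorem trace_maxEnt_mul (M : ℕ) (σ : Matrix (Fin M × Fin M) (Fin M × Fin M) ℂ) :
    (maxEnt M * σ).trace = (M : ℂ)⁻¹ *
      (Equiv.Perm.permMatrix ℂ (Equiv.prodComm (Fin M) (Fin M)) * ptB σ).trace := by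
  rw [trace_permMatrix_mul]
  simp [trace, mul_apply, maxEnt, ptB, Fintype.sum_prod_type, Finset.mul_sum, ite_and]

theorem maxEnt_overlap_le_of_pptPrime_general (M : ℕ)
    (σ : Matrix (Fin M × Fin M) (Fin M × Fin M) ℂ) (hσ : σ.PosSemidef)
    (hppt : traceNorm (ptB σ) ≤ 1) :
    ((maxEnt M * σ).trace).re ≤ 1 / M := by
  set F := Equiv.Perm.permMatrix ℂ (Equiv.prodComm (Fin M) (Fin M))
  calc ((maxEnt M * σ).trace).re = (M : ℝ)⁻¹ * (F * ptB σ).trace.re := by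
        rw [trace_maxEnt_mul, ← Complex.ofReal_natCast, ← Complex.ofReal_inv,
          Complex.re_ofReal_mul]
    _ ≤ (M : ℝ)⁻¹ * traceNorm (ptB σ) := by
        gcongr
        exact hσ.isHermitian.ptB.re_trace_unitary_mul_le_traceNorm
          (Equiv.Perm.permMatrix_mem_unitaryGroup _)
    _ ≤ 1 / M := by
        rw [one_div]
        exact mul_le_of_le_one_right (by positivity) hppt

/-- For any positive semidefinite `σ` with `‖T_B(σ)‖₁ ≤ 1`, the overlap with the
maximally entangled state satisfies `Tr[Φ σ] ≤ 1/M`. -/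
theorem maxEnt_overlap_le_of_pptPrime (M : ℕ) (hM : 0 < M)
    (σ : Matrix (Fin M × Fin M) (Fin M × Fin M) ℂ) (hσ : σ.PosSemidef)
    (hppt : traceNorm (ptB σ) ≤ 1) :
    ((maxEnt M * σ).trace).re ≤ 1 / M :=
  maxEnt_overlap_le_of_pptPrime_general M σ hσ hppt

end
end

section
/- For quantum states ρ and σ on the same finite-dimensional Hilbert space and any completely positive trace-preserving map Λ (represented as conjugation by Kraus operators), the max-relative entropy satisfies data processing: D_max(Λ(ρ)‖Λ(σ)) ≤ D_max(ρ‖σ). -/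
/-!
Conjugating by Kraus operators preserves positive semidefiniteness, so it maps every feasible
`λ` for `(ρ, σ)` (i.e. `λσ - ρ ≥ 0`) to a feasible `λ` for `(Λ ρ, Λ σ)`; hence the infimum can
only decrease. Since the channel preserves the trace, taking traces in `λ Λ(σ) ≥ Λ(ρ)` shows that
all feasible `λ` for the output states are at least `1`, so the infimum is positive and `log₂` is
monotone on it.
-/

open Matrix
open scoped ComplexOrder BigOperators Classical

noncomputable section


/-- Feasible set for the max-relative entropy: `{λ > 0 : ρ ≤ λσ}`. -/
def dmaxSet {ι : Type*} [Fintype ι] (ρ σ : Matrix ι ι ℂ) : Set ℝ :=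
  {l : ℝ | 0 < l ∧ (l • σ - ρ).PosSemidef}

/-- Max-relative entropy `D_max(ρ‖σ) = log₂ inf{λ > 0 : ρ ≤ λσ}`, with value `+∞`
if no such `λ` exists. -/

def Dmax {ι : Type*} [Fintype ι] (ρ σ : Matrix ι ι ℂ) : EReal :=
  if (dmaxSet ρ σ).Nonempty then ((Real.logb 2 (sInf (dmaxSet ρ σ)) : ℝ) : EReal) else ⊤

section KrausMap

variable {ι ι' κ R : Type*} [Fintype ι] [Fintype κ] [CommRing R] [StarRing R]

def krausMap (K : κ → Matrix ι' ι R) (M : Matrix ι ι R) : Matrix ι' ι' R :=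
  ∑ k, K k * M * (K k)ᴴ

lemma krausMap_sub (K : κ → Matrix ι' ι R) (M N : Matrix ι ι R) :
    krausMap K (M - N) = krausMap K M - krausMap K N := by
  simp only [krausMap, Matrix.mul_sub, Matrix.sub_mul, Finset.sum_sub_distrib]

lemma krausMap_smul {S : Type*} [Monoid S] [DistribMulAction S R] [IsScalarTower S R R]
    [SMulCommClass S R R] (K : κ → Matrix ι' ι R) (c : S) (M : Matrix ι ι R) :
    krausMap K (c • M) = c • krausMap K M := by
  simp only [krausMap, Matrix.mul_smul, Matrix.smul_mul, Finset.smul_sum]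

lemma Matrix.PosSemidef.krausMap [Fintype ι'] [PartialOrder R] [AddLeftMono R]
    (K : κ → Matrix ι' ι R) {M : Matrix ι ι R} (hM : M.PosSemidef) : (krausMap K M).PosSemidef :=
  posSemidef_sum _ fun k _ => hM.mul_mul_conjTranspose_same (K k)

lemma trace_krausMap [Fintype ι'] [DecidableEq ι] {K : κ → Matrix ι' ι R}
    (hK : ∑ k, (K k)ᴴ * K k = 1) (M : Matrix ι ι R) : (krausMap K M).trace = M.trace := by
  calc (krausMap K M).trace = ∑ k, ((K k)ᴴ * K k * M).trace := by
        simp only [krausMap, trace_sum]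
        exact Finset.sum_congr rfl fun k _ => trace_mul_cycle _ _ _
    _ = M.trace := by rw [← trace_sum, ← Finset.sum_mul, hK, one_mul]

end KrausMap

section Dmax

variable {ι : Type*} [Fintype ι]

lemma dmaxSet_subset_krausMap {ι' κ : Type*} [Fintype ι'] [Fintype κ] (K : κ → Matrix ι' ι ℂ)
    (ρ σ : Matrix ι ι ℂ) : dmaxSet ρ σ ⊆ dmaxSet (krausMap K ρ) (krausMap K σ) := by
  rintro l ⟨hl, hpsd⟩
  refine ⟨hl, ?_⟩
  rw [← krausMap_smul, ← krausMap_sub]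
  exact hpsd.krausMap K

lemma one_le_of_mem_dmaxSet {ρ σ : Matrix ι ι ℂ} (hρ : ρ.trace = 1) (hσ : σ.trace = 1) {l : ℝ}
    (hl : l ∈ dmaxSet ρ σ) : 1 ≤ l := by
  have htr : (0 : ℂ) ≤ (l • σ - ρ).trace := hl.2.trace_nonneg
  rw [trace_sub, trace_smul, hρ, hσ, Complex.real_smul, mul_one, sub_nonneg] at htr
  exact_mod_cast htr

lemma Dmax_le_of_dmaxSet_subset {ρ σ ρ' σ' : Matrix ι ι ℂ} (hρ' : ρ'.trace = 1)
    (hσ' : σ'.trace = 1) (hsub : dmaxSet ρ σ ⊆ dmaxSet ρ' σ') : Dmax ρ' σ' ≤ Dmax ρ σ := by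
  unfold Dmax
  by_cases hne : (dmaxSet ρ σ).Nonempty
  · have hne' : (dmaxSet ρ' σ').Nonempty := hne.mono hsub
    have hbound : ∀ l ∈ dmaxSet ρ' σ', 1 ≤ l := fun l hl => one_le_of_mem_dmaxSet hρ' hσ' hl
    have hpos : 0 < sInf (dmaxSet ρ' σ') := one_pos.trans_le (le_csInf hne' hbound)
    have hle : sInf (dmaxSet ρ' σ') ≤ sInf (dmaxSet ρ σ) := csInf_le_csInf ⟨1, hbound⟩ hne hsub
    rw [if_pos hne, if_pos hne']
    exact_mod_cast Real.logb_le_logb_of_le one_lt_two hpos hle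
  · rw [if_neg hne]
    exact le_top

end Dmax

theorem dmax_data_processing_general {ι : Type*} [Fintype ι] [DecidableEq ι]
    (m : ℕ) (K : Fin m → Matrix ι ι ℂ)
    (hK : ∑ k, (K k)ᴴ * K k = 1)
    (ρ σ : Matrix ι ι ℂ)
    (hρt : ρ.trace = 1)
    (hσt : σ.trace = 1) :
    Dmax (∑ k, K k * ρ * (K k)ᴴ) (∑ k, K k * σ * (K k)ᴴ) ≤ Dmax ρ σ :=
  Dmax_le_of_dmaxSet_subset ((trace_krausMap hK ρ).trans hρt)
    ((trace_krausMap hK σ).trans hσt)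
    (dmaxSet_subset_krausMap K ρ σ)

/-- Data processing for the max-relative entropy under a quantum channel given in
Kraus form: `D_max(Λ(ρ)‖Λ(σ)) ≤ D_max(ρ‖σ)`. -/
theorem dmax_data_processing {ι : Type*} [Fintype ι] [DecidableEq ι]
    (m : ℕ) (K : Fin m → Matrix ι ι ℂ)
    (hK : ∑ k, (K k)ᴴ * K k = 1)
    (ρ σ : Matrix ι ι ℂ)
    (hρ : ρ.PosSemidef) (hρt : ρ.trace = 1)
    (hσ : σ.PosSemidef) (hσt : σ.trace = 1) :
    Dmax (∑ k, K k * ρ * (K k)ᴴ) (∑ k, K k * σ * (K k)ᴴ) ≤ Dmax ρ σ :=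
  dmax_data_processing_general m K hK ρ σ hρt hσt

end
end
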